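/- Evaluation properties of the E6 hyperpolynomial of the (4,3) torus knot at t = ±1: in Z[q, a] one has (i) HD43(q, 1, a) = HDA43w2(q, 1, a); (ii) HD43(q, -1, a) = HDA43w2(q, -1, a); (iii) HD43(q, 1, a) = (1 + q + a*q + 2*q^2 + 2*a*q^2 + q^3 + 2*a*q^3 + a^2*q^3)^2, i.e., HD43(q,1,a) is the square of the type-A superpolynomial HDA43w1 evaluated at t = 1. -/
import Mathlib


set_option maxHeartbeats 1000000

open LaurentPolynomial

/-- The E6 hyperpolynomial of the (4,3) torus knot (DAHA conventions). -/
def HD43 {R : Type*} [CommRing R] (q t a : R) : R :=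
  1 + q*t + q*t^4 + q*t^9*a + q*t^12*a + q^2*t + q^2*t^2 + q^2*t^4 + q^2*t^5 + q^2*t^8
  + q^2*t^9*a + q^2*t^10*a + q^2*t^12*a + 2*q^2*t^13*a + q^2*t^16*a + q^2*t^21*a^2
  + q^3*t^3 + q^3*t^5 + q^3*t^6 + q^3*t^8 + q^3*t^9 + q^3*t^10*a + q^3*t^11*a + q^3*t^12
  + 3*q^3*t^13*a + 2*q^3*t^14*a + 2*q^3*t^16*a + 2*q^3*t^17*a + q^3*t^18*a^2 + q^3*t^20*a
  + 2*q^3*t^21*a^2 + q^3*t^22*a^2 + q^3*t^24*a^2 + q^3*t^25*a^2 + q^4*t^8 + q^4*t^9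
  + q^4*t^10 + q^4*t^12 + q^4*t^13 + q^4*t^13*a + q^4*t^14*a + q^4*t^15*a + q^4*t^16
  + q^4*t^16*a + 3*q^4*t^17*a + 2*q^4*t^18*a + 2*q^4*t^20*a + 2*q^4*t^21*a + q^4*t^21*a^2
  + 2*q^4*t^22*a^2 + q^4*t^23*a^2 + q^4*t^24*a + 3*q^4*t^25*a^2 + q^4*t^26*a^2
  + q^4*t^28*a^2 + q^4*t^29*a^2 + q^4*t^30*a^3 + q^4*t^33*a^3 + q^5*t^13 + q^5*t^16
  + q^5*t^17 + q^5*t^17*a + q^5*t^18*a + q^5*t^20 + q^5*t^20*a + 3*q^5*t^21*a + q^5*t^22*a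
  + q^5*t^22*a^2 + 2*q^5*t^24*a + 2*q^5*t^25*a + 2*q^5*t^25*a^2 + 2*q^5*t^26*a^2
  + q^5*t^28*a + q^5*t^28*a^2 + 3*q^5*t^29*a^2 + q^5*t^30*a^2 + q^5*t^30*a^3 + q^5*t^32*a^2
  + q^5*t^33*a^2 + q^5*t^33*a^3 + q^5*t^34*a^3 + q^5*t^37*a^3 + q^6*t^24 + q^6*t^25*a
  + q^6*t^28*a + q^6*t^29*a + q^6*t^29*a^2 + q^6*t^30*a^2 + q^6*t^32*a + 2*q^6*t^33*a^2
  + q^6*t^34*a^3 + q^6*t^36*a^2 + q^6*t^37*a^2 + q^6*t^37*a^3 + q^6*t^38*a^3 + q^6*t^41*a^3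
  + q^6*t^42*a^4

/-- The type-A DAHA-superpolynomial of the (4,3) torus knot colored by ω₂;
`ti` stands for the inverse t⁻¹ of `t`. -/
def HDA43w2 {R : Type*} [CommRing R] (q t ti a : R) : R :=
  1 + a^4*q^6*ti^2 + q*t + q^2*t + q*t^2 + 2*q^2*t^2 + q^2*t^3 + 2*q^3*t^3 + q^2*t^4
  + 2*q^3*t^4 + q^4*t^4 + q^3*t^5 + q^4*t^5 + q^3*t^6 + 2*q^4*t^6 + q^4*t^7 + q^5*t^7
  + q^4*t^8 + q^5*t^8 + q^5*t^9 + q^5*t^10 + q^6*t^12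
  + a^3*(q^5 + q^6 + q^4*ti^2 + q^5*ti^2 + q^4*ti + q^5*ti + q^5*t + q^6*t + q^6*t^2 + q^6*t^3)
  + a^2*(2*q^3 + 2*q^4 + q^5 + q^3*ti^2 + q^2*ti + 2*q^3*ti + q^4*ti + q^3*t + 4*q^4*t
      + 2*q^5*t + 2*q^4*t^2 + 3*q^5*t^2 + q^4*t^3 + 3*q^5*t^3 + q^6*t^3 + 2*q^5*t^4
      + q^6*t^4 + q^5*t^5 + 2*q^6*t^5 + q^6*t^6 + q^6*t^7)
  + a*(q + 2*q^2 + q^3 + q*ti + q^2*ti + 2*q^2*t + 4*q^3*t + q^4*t + q^2*t^2 + 4*q^3*t^2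
      + 2*q^4*t^2 + 2*q^3*t^3 + 4*q^4*t^3 + q^5*t^3 + q^3*t^4 + 4*q^4*t^4 + 2*q^5*t^4
      + 2*q^4*t^5 + 3*q^5*t^5 + q^4*t^6 + 3*q^5*t^6 + 2*q^5*t^7 + q^6*t^7 + q^5*t^8
      + q^6*t^8 + q^6*t^9 + q^6*t^10)

/-- The type-A DAHA-superpolynomial of the (3,2) torus knot colored by ω₁. -/
def HDA32w1 {R : Type*} [CommRing R] (q t a : R) : R :=
  1 + a*q + q*t

/-- The type-A DAHA-superpolynomial of the (5,2) torus knot colored by ω₁. -/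
def HDA52w1 {R : Type*} [CommRing R] (q t a : R) : R :=
  1 + q*t + q^2*t^2 + a*(q + q^2*t)

/-- The type-A DAHA-superpolynomial of the (4,3) torus knot colored by ω₁. -/
def HDA43w1 {R : Type*} [CommRing R] (q t a : R) : R :=
  1 + a^2*q^3 + q*t + q^2*t + q^2*t^2 + q^3*t^3 + a*(q + q^2 + q^2*t + q^3*t + q^3*t^2)

/-- The Laurent polynomial ring ℤ[q^{±1}, a^{±1}]: `q` is the inner variable, `a` the outer. -/
abbrev Rqa : Type := LaurentPolynomial (LaurentPolynomial ℤ)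

/-- The variable q in ℤ[q^{±1}, a^{±1}]. -/
noncomputable def qv : Rqa := C (T 1)
/-- The variable a in ℤ[q^{±1}, a^{±1}]. -/
noncomputable def av : Rqa := T 1

/-- Evaluation properties of the E6 hyperpolynomial of the (4,3) torus knot at t = ±1,
in the Laurent polynomial ring ℤ[q^{±1}, a^{±1}] (note that t⁻¹ = ±1 when t = ±1). -/
theorem E6_hyperpolynomial_T43_evaluations :
    HD43 qv 1 av = HDA43w2 qv 1 1 av ∧
    HD43 qv (-1) av = HDA43w2 qv (-1) (-1) av ∧
    HD43 qv 1 av = (1 + qv + av*qv + 2*qv^2 + 2*av*qv^2 + qv^3 + 2*av*qv^3 + av^2*qv^3)^2 ∧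
    HD43 qv 1 av = (HDA43w1 qv 1 av)^2 := by
  refine ⟨?_, ?_, ?_, ?_⟩ <;> simp only [HD43, HDA43w2, HDA43w1] <;> ring
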